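/- Sandwich relation for odd-degree graphs: if every vertex of the graph G has odd degree, then for every β ∈ ℝ, exp(-i(π/2)H_C) · exp(iβH_B) · exp(-i(π/2)H_C) = (-1)^{|E|} · exp(-iβH_B), where |E| is the number of edges of G. -/

import Mathlib

open Matrix Complex

noncomputable section

/-- Computational basis index set for `n` qubits, identified with `Fin 2 ^ n` via binary digits. -/
abbrev QIdx (n : ℕ) := Fin n → Fin 2

/-- The Pauli X matrix. -/
def pauliX : Matrix (Fin 2) (Fin 2) ℂ := !![0, 1; 1, 0]

/-- The Pauli Z matrix. -/
def pauliZ : Matrix (Fin 2) (Fin 2) ℂ := !![1, 0; 0, -1]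

/-- The `n`-fold Kronecker product with `M` in the `i`-th tensor factor and the 2×2 identity in
every other factor, realized as a matrix on `ℂ^(2^n)` with indices `Fin n → Fin 2`. -/
def pauliAt {n : ℕ} (M : Matrix (Fin 2) (Fin 2) ℂ) (i : Fin n) :
    Matrix (QIdx n) (QIdx n) ℂ :=
  Matrix.of fun s t => ∏ j, if j = i then M (s j) (t j) else if s j = t j then 1 else 0

/-- `σ^x_i`. -/
def sigmaX {n : ℕ} (i : Fin n) : Matrix (QIdx n) (QIdx n) ℂ := pauliAt pauliX i

/-- `σ^z_i`. -/
def sigmaZ {n : ℕ} (i : Fin n) : Matrix (QIdx n) (QIdx n) ℂ := pauliAt pauliZ i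

lemma sigmaZ_eq_diagonal {n : ℕ} (i : Fin n) :
    sigmaZ i = Matrix.diagonal (fun s => pauliZ (s i) (s i)) := by
  ext s t
  simp only [sigmaZ, pauliAt, Matrix.of_apply, Matrix.diagonal_apply]
  by_cases h : s = t
  · subst h
    simp [Finset.prod_ite_eq']
  · rw [if_neg h]
    obtain ⟨j₀, hj₀⟩ := Function.ne_iff.mp h
    refine Finset.prod_eq_zero (Finset.mem_univ j₀) ?_
    by_cases hji : j₀ = i
    · subst hji
      rw [if_pos rfl]
      have hz : ∀ a b : Fin 2, a ≠ b → pauliZ a b = 0 := by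
        intro a b hab
        fin_cases a <;> fin_cases b <;> simp_all [pauliZ]
      exact hz _ _ hj₀
    · rw [if_neg hji, if_neg hj₀]

lemma sigmaZ_mul_comm {n : ℕ} (i j : Fin n) : sigmaZ i * sigmaZ j = sigmaZ j * sigmaZ i := by
  rw [sigmaZ_eq_diagonal, sigmaZ_eq_diagonal, Matrix.diagonal_mul_diagonal,
    Matrix.diagonal_mul_diagonal]
  ext s
  simp [mul_comm]

/-- The MaxCut Hamiltonian `H_C = Σ_{{i,j} ∈ E} σ^z_i σ^z_j`. -/
def hamC (n : ℕ) (G : SimpleGraph (Fin n)) [DecidableRel G.Adj] :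
    Matrix (QIdx n) (QIdx n) ℂ :=
  ∑ e ∈ G.edgeFinset,
    Sym2.lift ⟨fun i j => sigmaZ i * sigmaZ j, fun i j => sigmaZ_mul_comm i j⟩ e

/-- The mixing Hamiltonian `H_B = -Σ_i σ^x_i`. -/
def hamB (n : ℕ) : Matrix (QIdx n) (QIdx n) ℂ := -(∑ i : Fin n, sigmaX i)

/-- `U_B(β) = exp(-i β H_B)`. -/
def uB (n : ℕ) (β : ℝ) : Matrix (QIdx n) (QIdx n) ℂ :=
  NormedSpace.exp ((-(Complex.I) * (β : ℂ)) • hamB n)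

/-- `U_C(γ) = exp(-i γ H_C)`. -/
def uC (n : ℕ) (G : SimpleGraph (Fin n)) [DecidableRel G.Adj] (γ : ℝ) :
    Matrix (QIdx n) (QIdx n) ℂ :=
  NormedSpace.exp ((-(Complex.I) * (γ : ℂ)) • hamC n G)

/-- The plus state `|+⟩ = 2^{-n/2} (1,…,1)ᵀ`. -/
def plusState (n : ℕ) : QIdx n → ℂ := fun _ => ((Real.sqrt 2 : ℂ))⁻¹ ^ n

/-- The `m`-th layer `U_B(β_{m+1}) U_C(γ_{m+1})` of the QAOA circuit (`m` is 0-indexed);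
`1` if `m` is out of range. -/
def qaoaLayer (n : ℕ) (G : SimpleGraph (Fin n)) [DecidableRel G.Adj] {p : ℕ}
    (β γ : Fin p → ℝ) (m : ℕ) : Matrix (QIdx n) (QIdx n) ℂ :=
  if h : m < p then uB n (β ⟨m, h⟩) * uC n G (γ ⟨m, h⟩) else 1

/-- The ordered product of the (0-indexed) layers `a, a+1, …, a+len-1` of the QAOA circuit, with
higher layers acting later (to the left). -/
def uProd (n : ℕ) (G : SimpleGraph (Fin n)) [DecidableRel G.Adj] {p : ℕ}
    (β γ : Fin p → ℝ) (a len : ℕ) : Matrix (QIdx n) (QIdx n) ℂ :=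
  (((List.range' a len).reverse).map (qaoaLayer n G β γ)).prod

/-- The depth-`p` QAOA state `|β,γ⟩ = U_B(β_p) U_C(γ_p) ⋯ U_B(β_1) U_C(γ_1) |+⟩`. -/
def qaoaState (n : ℕ) (G : SimpleGraph (Fin n)) [DecidableRel G.Adj] {p : ℕ}
    (β γ : Fin p → ℝ) : QIdx n → ℂ :=
  (uProd n G β γ 0 p).mulVec (plusState n)

/-- The depth-`p` QAOA cost function `E_p(β,γ) = ⟨β,γ| H_C |β,γ⟩` as a real-valued function on
`ℝ^p × ℝ^p`. -/
def energyE (n : ℕ) (G : SimpleGraph (Fin n)) [DecidableRel G.Adj] (p : ℕ)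
    (x : (Fin p → ℝ) × (Fin p → ℝ)) : ℝ :=
  (star (qaoaState n G x.1 x.2) ⬝ᵥ (hamC n G).mulVec (qaoaState n G x.1 x.2)).re

/-- The point `Γ^{p+1}(i,j)` obtained from `(β⋆,γ⋆) ∈ ℝ^p × ℝ^p` by inserting a `0` at
position `i` in the `β`-part and at position `j` in the `γ`-part. -/
def padded {p : ℕ} (x : (Fin p → ℝ) × (Fin p → ℝ)) (i j : Fin (p + 1)) :
    (Fin (p + 1) → ℝ) × (Fin (p + 1) → ℝ) :=
  (i.insertNth 0 x.1, j.insertNth 0 x.2)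

/-- The coordinate direction in `ℝ^p × ℝ^p` corresponding to `β_l` (`Sum.inl l`) or
`γ_l` (`Sum.inr l`). -/
def coordDir {p : ℕ} : Fin p ⊕ Fin p → (Fin p → ℝ) × (Fin p → ℝ) :=
  Sum.elim (fun l => (Pi.single l 1, 0)) (fun l => (0, Pi.single l 1))

/-- Partial derivative of a real function on `ℝ^p × ℝ^p` in the coordinate direction `a`. -/
def pderiv' {p : ℕ} (f : ((Fin p → ℝ) × (Fin p → ℝ)) → ℝ)
    (a : Fin p ⊕ Fin p) (x : (Fin p → ℝ) × (Fin p → ℝ)) : ℝ :=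
  fderiv ℝ f x (coordDir a)

/-- The Hessian matrix of a real function on `ℝ^p × ℝ^p`, with rows and columns indexed by the
coordinates `β_1,…,β_p` (`Sum.inl`) and `γ_1,…,γ_p` (`Sum.inr`). -/
def hessian {p : ℕ} (f : ((Fin p → ℝ) × (Fin p → ℝ)) → ℝ)
    (x : (Fin p → ℝ) × (Fin p → ℝ)) : Matrix (Fin p ⊕ Fin p) (Fin p ⊕ Fin p) ℝ :=
  Matrix.of fun a b => pderiv' (pderiv' f b) a x

/-- The commutator `[A, B] = AB - BA`. -/
def commMat {n : ℕ} (A B : Matrix (QIdx n) (QIdx n) ℂ) : Matrix (QIdx n) (QIdx n) ℂ :=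
  A * B - B * A

end

/-!
In the computational basis `H_C` is diagonal, each edge contributing the eigenvalue `±1` of
`σ^z_i σ^z_j`, and `exp(-i(π/2)x) = -i x` for `x = ±1`. Hence `U_C(π/2) = D` is diagonal with
entries `d(s) = (-i)^|E| ∏_{ij ∈ E} z_i(s) z_j(s)`, so `D² = (-1)^|E|`. Flipping the bit `i`
of `s` changes the sign of exactly the `deg i` factors of edges at `i`, so for odd degrees
`d` changes sign: `D` anticommutes with every `σ^x_i`, hence with `H_B`, and therefore
`D exp(iβH_B) D = exp(-iβH_B) D² = (-1)^|E| exp(-iβH_B)`.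
-/

theorem SemiconjBy.mul_exp_mul_self {𝔸 : Type*} [NormedRing 𝔸] [NormedAlgebra ℚ 𝔸]
    [CompleteSpace 𝔸] {d x : 𝔸} (h : SemiconjBy d x (-x)) :
    d * NormedSpace.exp x * d = NormedSpace.exp (-x) * (d * d) := by
  rw [h.exp_right.eq, mul_assoc]

lemma Complex.exp_neg_I_mul_pi_div_two_mul {x : ℂ} (hx : x * x = 1) :
    Complex.exp (-I * ((Real.pi / 2 : ℝ) : ℂ) * x) = -I * x := by
  rcases mul_self_eq_one_iff.mp hx with rfl | rfl
  · rw [mul_one, neg_mul, exp_neg, mul_comm, ofReal_div, ofReal_ofNat, exp_pi_div_two_mul_I,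
      inv_I, mul_one]
  · rw [mul_neg_one, neg_mul, neg_neg, mul_comm, ofReal_div, ofReal_ofNat, exp_pi_div_two_mul_I]
    ring

lemma pauliZ_mul_self (a : Fin 2) : pauliZ a a * pauliZ a a = 1 := by
  fin_cases a <;> simp [pauliZ]

lemma pauliZ_add_one (a : Fin 2) : pauliZ (a + 1) (a + 1) = -pauliZ a a := by
  fin_cases a <;> simp [pauliZ]

section

variable {n : ℕ}

lemma sigmaX_apply (i : Fin n) (s t : QIdx n) :
    sigmaX i s t = if t = Function.update s i (s i + 1) then 1 else 0 := by
  have hX : ∀ a b : Fin 2, pauliX a b = if b = a + 1 then 1 else 0 := by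
    intro a b
    fin_cases a <;> fin_cases b <;> simp [pauliX]
  have hfactor : ∀ j, (if j = i then pauliX (s j) (t j) else if s j = t j then 1 else 0) =
      if t j = Function.update s i (s i + 1) j then (1 : ℂ) else 0 := by
    intro j
    by_cases hj : j = i
    · subst hj
      simp [hX]
    · simp [hj, eq_comm]
  rw [sigmaX, pauliAt, of_apply, Finset.prod_congr rfl fun j _ => hfactor j, Finset.prod_boole]
  simp [funext_iff]

lemma semiconjBy_diagonal_sigmaX {d : QIdx n → ℂ} {i : Fin n}
    (hd : ∀ s, d (Function.update s i (s i + 1)) = -d s) :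
    SemiconjBy (diagonal d) (sigmaX i) (-sigmaX i) := by
  ext s t
  rw [diagonal_mul, neg_mul, neg_apply, mul_diagonal, sigmaX_apply]
  split_ifs with h
  · rw [h, hd]
    ring
  · simp

lemma semiconjBy_diagonal_hamB {d : QIdx n → ℂ}
    (hd : ∀ i s, d (Function.update s i (s i + 1)) = -d s) :
    SemiconjBy (diagonal d) (hamB n) (-hamB n) := by
  have hsum : SemiconjBy (diagonal d) (∑ i, sigmaX i) (-∑ i, sigmaX i) := by
    rw [SemiconjBy, Finset.mul_sum, ← Finset.sum_neg_distrib, Finset.sum_mul]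
    exact Finset.sum_congr rfl fun i _ => semiconjBy_diagonal_sigmaX (hd i)
  exact hsum.neg_right

def zzEigenvalue (s : QIdx n) : Sym2 (Fin n) → ℂ :=
  Sym2.lift ⟨fun i j => pauliZ (s i) (s i) * pauliZ (s j) (s j), fun _ _ => mul_comm _ _⟩

lemma zzEigenvalue_mul_self (s : QIdx n) (e : Sym2 (Fin n)) :
    zzEigenvalue s e * zzEigenvalue s e = 1 := by
  induction e using Sym2.ind with
  | _ i j =>
    rw [zzEigenvalue, Sym2.lift_mk, mul_mul_mul_comm, pauliZ_mul_self, pauliZ_mul_self, mul_one]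

lemma zzEigenvalue_flip (s : QIdx n) (i : Fin n) {e : Sym2 (Fin n)} (he : ¬e.IsDiag) :
    zzEigenvalue (Function.update s i (s i + 1)) e =
      (if i ∈ e then -1 else 1) * zzEigenvalue s e := by
  induction e using Sym2.ind with
  | _ a b =>
    have hab : a ≠ b := he
    simp only [zzEigenvalue, Sym2.lift_mk, Sym2.mem_iff]
    by_cases hia : i = a
    · subst hia
      simp [Function.update_of_ne (Ne.symm hab), pauliZ_add_one]
    · by_cases hib : i = b
      · subst hib
        simp [Function.update_of_ne hab, pauliZ_add_one]
      · simp [Function.update_of_ne (Ne.symm hia), Function.update_of_ne (Ne.symm hib), hia, hib]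

variable (G : SimpleGraph (Fin n)) [DecidableRel G.Adj]

lemma hamC_eq_diagonal : hamC n G = diagonal fun s => ∑ e ∈ G.edgeFinset, zzEigenvalue s e := by
  have hterm : ∀ e : Sym2 (Fin n),
      Sym2.lift ⟨fun i j => sigmaZ i * sigmaZ j, fun i j => sigmaZ_mul_comm i j⟩ e =
        diagonal fun s => zzEigenvalue s e := by
    intro e
    induction e using Sym2.ind with
    | _ i j =>
      change sigmaZ i * sigmaZ j = _
      rw [sigmaZ_eq_diagonal, sigmaZ_eq_diagonal, diagonal_mul_diagonal]
      rfl
  rw [hamC, Finset.sum_congr rfl fun e _ => hterm e, ← Finset.sum_fn]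
  exact (map_sum (diagonalAddMonoidHom (QIdx n) ℂ) _ _).symm

def halfPiPhase (s : QIdx n) : ℂ :=
  (-I) ^ G.edgeFinset.card * ∏ e ∈ G.edgeFinset, zzEigenvalue s e

lemma uC_pi_div_two : uC n G (Real.pi / 2) = diagonal (halfPiPhase G) := by
  rw [uC, hamC_eq_diagonal, ← diagonal_smul, exp_diagonal]
  congr 1
  ext s
  rw [Pi.coe_exp, Pi.smul_apply, smul_eq_mul, ← congrFun Complex.exp_eq_exp_ℂ, Finset.mul_sum,
    Complex.exp_sum, Finset.prod_congr rfl fun e _ =>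
      Complex.exp_neg_I_mul_pi_div_two_mul (zzEigenvalue_mul_self s e),
    Finset.prod_mul_distrib, Finset.prod_const, halfPiPhase]

lemma halfPiPhase_mul_self (s : QIdx n) :
    halfPiPhase G s * halfPiPhase G s = (-1) ^ G.edgeFinset.card := by
  rw [halfPiPhase, mul_mul_mul_comm, ← mul_pow, ← Finset.prod_mul_distrib,
    Finset.prod_congr rfl fun e _ => zzEigenvalue_mul_self s e]
  simp

lemma halfPiPhase_flip (hodd : ∀ v, Odd (G.degree v)) (s : QIdx n) (i : Fin n) :
    halfPiPhase G (Function.update s i (s i + 1)) = -halfPiPhase G s := by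
  have hsign : ∏ e ∈ G.edgeFinset, (if i ∈ e then (-1 : ℂ) else 1) = -1 := by
    rw [Finset.prod_ite, Finset.prod_const_one, mul_one, Finset.prod_const,
      ← G.incidenceFinset_eq_filter, G.card_incidenceFinset_eq_degree, (hodd i).neg_one_pow]
  rw [halfPiPhase, halfPiPhase, Finset.prod_congr rfl fun e he =>
      zzEigenvalue_flip s i (G.not_isDiag_of_mem_edgeSet (G.mem_edgeFinset.mp he)),
    Finset.prod_mul_distrib, hsign]
  ring

end

theorem stmt18_general (n : ℕ) (G : SimpleGraph (Fin n)) [DecidableRel G.Adj]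
    (hodd : ∀ v : Fin n, Odd (G.degree v)) (β : ℝ) :
    uC n G (Real.pi / 2) * NormedSpace.exp ((Complex.I * (β : ℂ)) • hamB n) *
        uC n G (Real.pi / 2) =
      ((-1 : ℂ)) ^ G.edgeFinset.card • uB n β := by
  set D := diagonal (halfPiPhase G)
  have hanti : SemiconjBy D ((I * β) • hamB n) (-((I * β) • hamB n)) := by
    simpa only [smul_neg] using
      (semiconjBy_diagonal_hamB fun i s => halfPiPhase_flip G hodd s i).smul_right (I * β)
  have hsq : D * D = ((-1 : ℂ)) ^ G.edgeFinset.card • 1 := by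
    rw [diagonal_mul_diagonal, smul_one_eq_diagonal]
    simp only [halfPiPhase_mul_self]
  have hsandwich : D * NormedSpace.exp ((I * β) • hamB n) * D =
      NormedSpace.exp (-((I * β) • hamB n)) * (D * D) :=
    open scoped Matrix.Norms.Operator in hanti.mul_exp_mul_self
  rw [uC_pi_div_two, hsandwich, hsq, uB, mul_smul_one, neg_mul, neg_smul]

/-- sandwich relation for odd-degree graphs:
`exp(-i(π/2)H_C) exp(iβH_B) exp(-i(π/2)H_C) = (-1)^|E| exp(-iβH_B)`. -/
theorem stmt18 (n : ℕ) (hn : 1 ≤ n) (G : SimpleGraph (Fin n)) [DecidableRel G.Adj]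
    (hodd : ∀ v : Fin n, Odd (G.degree v)) (β : ℝ) :
    uC n G (Real.pi / 2) * NormedSpace.exp ((Complex.I * (β : ℂ)) • hamB n) *
        uC n G (Real.pi / 2) =
      ((-1 : ℂ)) ^ G.edgeFinset.card • uB n β :=
  stmt18_general n G hodd β
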